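/- With the optimal twisting sequence ψ*, all twisted potentials are constant: g₁^{ψ*}(x) = ψ̃*₀ for all x, and g_t^{ψ*}(x) = 1 for all x and t ∈ {2,…,T}, where ψ̃*₀ = ∫ μ(x₁)ψ*₁(x₁)dx₁. -/

import Mathlib

/-!
Peeling off the first step of the path integral (Tonelli) gives the backward recursion
`condProd (n+1) t x = ∫ f(x,y) g_{t+1}(y) condProd n (t+1) y dy`, so `ψ̃*_t` equals the conditional
expectation `condProd (T-1-t) t` and `g_t ψ̃*_t = ψ*_t`; every twisted potential then cancels.
The recursion is proved for the `ℝ≥0∞`-valued path integral, where Tonelli needs no integrability.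
Passing back to real integrals only needs that integral to be finite at time `t + 1`, and this
follows from `ψ*_{t+1} > 0`, because a divergent path integral has real value `0`.
-/

open MeasureTheory Finset

/-- `condProd f g n t x` is the iterated (joint) integral
`E[∏_{p=t+1}^{t+n} g_p(X_p) | X_t = x]` for the Markov chain with transition density `f`
and potentials `g_p`, written as an integral over the path space `X^n`. For `n = 0` it
equals `1` (empty product, probability measure on the one-point path space). -/
noncomputable def condProd {d : ℕ} (f : (Fin d → ℝ) → (Fin d → ℝ) → ℝ)
    (g : ℕ → (Fin d → ℝ) → ℝ) (n t : ℕ) (x : Fin d → ℝ) : ℝ :=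
  ∫ z : Fin n → (Fin d → ℝ),
    ∏ p : Fin n,
      (f (if p.val = 0 then x
          else z ⟨p.val - 1, Nat.lt_of_le_of_lt (Nat.sub_le _ _) p.isLt⟩) (z p)
        * g (t + 1 + p.val) (z p))

open scoped ENNReal

theorem lintegral_fin_succ_eq_lintegral_cons {α : Type*} [MeasureSpace α]
    [SigmaFinite (volume : Measure α)] {n : ℕ} {F : (Fin (n + 1) → α) → ℝ≥0∞}
    (hF : Measurable F) :
    ∫⁻ z, F z = ∫⁻ y, ∫⁻ w, F (Fin.cons y w) := by
  let e := (MeasurableEquiv.piFinSuccAbove (fun _ : Fin (n + 1) => α) 0).symm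
  have he : ∀ y w, e (y, w) = Fin.cons y w := fun y w => by
    simp [e, MeasurableEquiv.piFinSuccAbove_symm_apply, Fin.insertNthEquiv, Fin.insertNth_zero']
  rw [(volume_preserving_piFinSuccAbove _ 0).symm.lintegral_map_equiv F e,
    Measure.volume_eq_prod, lintegral_prod (fun q => F (e q)) (hF.comp e.measurable).aemeasurable]
  simp only [he]

section PathWeight

variable {α : Type*} (f : α → α → ℝ) (g : ℕ → α → ℝ)

def pathWeight (n t : ℕ) (x : α) (z : Fin n → α) (p : Fin n) : ℝ :=
  f (if p.val = 0 then x
      else z ⟨p.val - 1, Nat.lt_of_le_of_lt (Nat.sub_le _ _) p.isLt⟩) (z p)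
    * g (t + 1 + p.val) (z p)

variable {f g}

theorem pathWeight_cons_zero (n t : ℕ) (x y : α) (w : Fin n → α) :
    pathWeight f g (n + 1) t x (Fin.cons y w) 0 = f x y * g (t + 1) y := by
  simp [pathWeight]

theorem pathWeight_cons_succ (n t : ℕ) (x y : α) (w : Fin n → α) (p : Fin n) :
    pathWeight f g (n + 1) t x (Fin.cons y w) p.succ = pathWeight f g n (t + 1) y w p := by
  rcases p with ⟨_ | k, hk⟩
  · rfl
  · simp only [pathWeight, Fin.succ_mk, Nat.add_eq_zero_iff, one_ne_zero, and_false, if_false]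
    rw [show t + 1 + (k + 1 + 1) = t + 1 + 1 + (k + 1) by omega]
    rfl

theorem measurable_pathWeight [MeasurableSpace α] (hf : Measurable (Function.uncurry f))
    (hg : ∀ t, Measurable (g t)) (n t : ℕ) (p : Fin n) :
    Measurable fun q : α × (Fin n → α) => pathWeight f g n t q.1 q.2 p := by
  unfold pathWeight
  split_ifs <;> fun_prop

end PathWeight

section LIntegral

variable {α : Type*} [MeasureSpace α] [SigmaFinite (volume : Measure α)]
  {f : α → α → ℝ} {g : ℕ → α → ℝ}

variable (f g) in
noncomputable def lcondProd (n t : ℕ) (x : α) : ℝ≥0∞ :=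
  ∫⁻ z, ∏ p, ENNReal.ofReal (pathWeight f g n t x z p)

theorem measurable_lcondProd (hf : Measurable (Function.uncurry f))
    (hg : ∀ t, Measurable (g t)) (n t : ℕ) : Measurable (lcondProd f g n t) :=
  Measurable.lintegral_prod_right' <| Finset.measurable_prod _ fun p _ =>
    (measurable_pathWeight hf hg n t p).ennreal_ofReal

theorem lcondProd_succ (hf : Measurable (Function.uncurry f))
    (hg : ∀ t, Measurable (g t)) (n t : ℕ) (x : α) :
    lcondProd f g (n + 1) t x
      = ∫⁻ y, ENNReal.ofReal (f x y * g (t + 1) y) * lcondProd f g n (t + 1) y := by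
  rw [lcondProd, lintegral_fin_succ_eq_lintegral_cons]
  · refine lintegral_congr fun y => ?_
    simp only [Fin.prod_univ_succ, pathWeight_cons_zero, pathWeight_cons_succ]
    exact lintegral_const_mul' _ _ ENNReal.ofReal_ne_top
  · exact Finset.measurable_prod _ fun p _ =>
      ((measurable_pathWeight hf hg (n + 1) t p).comp measurable_prodMk_left).ennreal_ofReal

end LIntegral

section CondProd

variable {d : ℕ} {f : (Fin d → ℝ) → (Fin d → ℝ) → ℝ} {g : ℕ → (Fin d → ℝ) → ℝ}

theorem condProd_zero (t : ℕ) (x : Fin d → ℝ) : condProd f g 0 t x = 1 := by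
  simp [condProd, measureReal_def, volume_pi]

theorem condProd_eq_toReal_lcondProd (hf_nonneg : ∀ x x', 0 ≤ f x x')
    (hf : Measurable (Function.uncurry f)) (hg_nonneg : ∀ t x, 0 ≤ g t x)
    (hg : ∀ t, Measurable (g t)) (n t : ℕ) (x : Fin d → ℝ) :
    condProd f g n t x = (lcondProd f g n t x).toReal := by
  have hw : ∀ z p, 0 ≤ pathWeight f g n t x z p := fun _ _ =>
    mul_nonneg (hf_nonneg _ _) (hg_nonneg _ _)
  change ∫ z, ∏ p, pathWeight f g n t x z p = _
  rw [integral_eq_lintegral_of_nonneg_ae (ae_of_all _ fun z => Finset.prod_nonneg fun p _ => hw z p)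
    (Finset.measurable_prod _ fun p _ =>
      (measurable_pathWeight hf hg n t p).comp measurable_prodMk_left).aestronglyMeasurable]
  simp_rw [ENNReal.ofReal_prod_of_nonneg fun p _ => hw _ p]
  rfl

theorem condProd_succ (hf_nonneg : ∀ x x', 0 ≤ f x x')
    (hf : Measurable (Function.uncurry f)) (hg_nonneg : ∀ t x, 0 ≤ g t x)
    (hg : ∀ t, Measurable (g t)) {n t : ℕ} (hfin : ∀ y, lcondProd f g n (t + 1) y ≠ ⊤)
    (x : Fin d → ℝ) :
    condProd f g (n + 1) t x = ∫ y, f x y * (g (t + 1) y * condProd f g n (t + 1) y) := by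
  simp_rw [condProd_eq_toReal_lcondProd hf_nonneg hf hg_nonneg hg]
  rw [lcondProd_succ hf hg, integral_eq_lintegral_of_nonneg_ae
    (ae_of_all _ fun y =>
      mul_nonneg (hf_nonneg x y) (mul_nonneg (hg_nonneg _ y) ENNReal.toReal_nonneg))
    ((hf.comp measurable_prodMk_left).mul
      ((hg _).mul (measurable_lcondProd hf hg n (t + 1)).ennreal_toReal)).aestronglyMeasurable]
  congr 1
  refine lintegral_congr fun y => ?_
  rw [← mul_assoc, ENNReal.ofReal_mul (mul_nonneg (hf_nonneg x y) (hg_nonneg _ y)),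
    ENNReal.ofReal_toReal (hfin y)]

end CondProd

theorem optimal_twisted_potentials_constant_general {d : ℕ} (T : ℕ) (hT : 0 < T)
    (f : (Fin d → ℝ) → (Fin d → ℝ) → ℝ) (g : ℕ → (Fin d → ℝ) → ℝ)
    (hf_nonneg : ∀ x x', 0 ≤ f x x') (hf_meas : Measurable (Function.uncurry f))
    (hg_meas : ∀ t, Measurable (g t)) (hg_nonneg : ∀ t x, 0 ≤ g t x)
    (ψs ψts : ℕ → (Fin d → ℝ) → ℝ)
    (hψs : ∀ t, t < T → ∀ x, ψs t x = g t x * condProd f g (T - 1 - t) t x)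
    (hψs_pos : ∀ t, t < T → ∀ x, 0 < ψs t x)
    (hψts : ∀ t, t + 1 < T → ∀ x, ψts t x = ∫ x', f x x' * ψs (t + 1) x')
    (hψts_last : ∀ x, ψts (T - 1) x = 1)
    (ψt0s : ℝ)
    (gψ : ℕ → (Fin d → ℝ) → ℝ)
    (hgψ0 : ∀ x, gψ 0 x = g 0 x * ψts 0 x * ψt0s / ψs 0 x)
    (hgψ : ∀ t, 1 ≤ t → ∀ x, gψ t x = g t x * ψts t x / ψs t x) :
    (∀ x, gψ 0 x = ψt0s) ∧ (∀ t, 1 ≤ t → t < T → ∀ x, gψ t x = 1) := by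
  have hψts_eq : ∀ t, t < T → ∀ x, ψts t x = condProd f g (T - 1 - t) t x := by
    intro t ht x
    rcases Nat.lt_or_ge (t + 1) T with hlt | hge
    · have hfin : ∀ y, lcondProd f g (T - 1 - (t + 1)) (t + 1) y ≠ ⊤ := fun y htop => by
        have hpos := hψs_pos (t + 1) hlt y
        rw [hψs (t + 1) hlt y, condProd_eq_toReal_lcondProd hf_nonneg hf_meas hg_nonneg hg_meas,
          htop, ENNReal.toReal_top, mul_zero] at hpos
        exact lt_irrefl 0 hpos
      rw [hψts t hlt x, show T - 1 - t = T - 1 - (t + 1) + 1 by omega,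
        condProd_succ hf_nonneg hf_meas hg_nonneg hg_meas hfin]
      simp_rw [hψs (t + 1) hlt]
    · rw [show t = T - 1 by omega, hψts_last, Nat.sub_self, condProd_zero]
  have hψ_eq : ∀ t, t < T → ∀ x, g t x * ψts t x = ψs t x := fun t ht x => by
    rw [hψts_eq t ht x, hψs t ht x]
  refine ⟨fun x => ?_, fun t ht1 ht x => ?_⟩
  · rw [hgψ0, hψ_eq 0 hT, mul_div_right_comm, div_self (hψs_pos 0 hT x).ne', one_mul]
  · rw [hgψ t ht1, hψ_eq t ht, div_self (hψs_pos t ht x).ne']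

/-- with the optimal twisting sequence `ψ*` (times indexed `0,…,T-1`), all
twisted potentials are constant: `g₀^{ψ*}(x) = ψ̃*₀ = ∫ μ ψ*₀` for all `x`, and
`g_t^{ψ*}(x) = 1` for all `x` and all `t ∈ {1,…,T-1}`. -/
theorem optimal_twisted_potentials_constant {d : ℕ} (T : ℕ) (hT : 0 < T)
    (μ : (Fin d → ℝ) → ℝ)
    (f : (Fin d → ℝ) → (Fin d → ℝ) → ℝ) (g : ℕ → (Fin d → ℝ) → ℝ)
    (hf_nonneg : ∀ x x', 0 ≤ f x x') (hf_meas : Measurable (Function.uncurry f))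
    (hf_int : ∀ x, ∫ x', f x x' = 1)
    (hg_meas : ∀ t, Measurable (g t)) (hg_nonneg : ∀ t x, 0 ≤ g t x)
    (hg_cont : ∀ t, Continuous (g t)) (hg_bdd : ∀ t, ∃ B, ∀ x, g t x ≤ B)
    (ψs ψts : ℕ → (Fin d → ℝ) → ℝ)
    (hψs : ∀ t, t < T → ∀ x, ψs t x = g t x * condProd f g (T - 1 - t) t x)
    (hψs_pos : ∀ t, t < T → ∀ x, 0 < ψs t x)
    (hψts : ∀ t, t + 1 < T → ∀ x, ψts t x = ∫ x', f x x' * ψs (t + 1) x')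
    (hψts_last : ∀ x, ψts (T - 1) x = 1)
    (ψt0s : ℝ) (hψt0s : ψt0s = ∫ x, μ x * ψs 0 x)
    (gψ : ℕ → (Fin d → ℝ) → ℝ)
    (hgψ0 : ∀ x, gψ 0 x = g 0 x * ψts 0 x * ψt0s / ψs 0 x)
    (hgψ : ∀ t, 1 ≤ t → ∀ x, gψ t x = g t x * ψts t x / ψs t x) :
    (∀ x, gψ 0 x = ψt0s) ∧ (∀ t, 1 ≤ t → t < T → ∀ x, gψ t x = 1) :=
  optimal_twisted_potentials_constant_general T hT f g hf_nonneg hf_meas hg_meas hg_nonneg ψs ψts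
    hψs hψs_pos hψts hψts_last ψt0s gψ hgψ0 hgψ
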